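/- Let F be a rooted forest and let X be a set of nodes of F. Then the set MF(X) of maximal X-factors forms a partition of X, where a factor of F is either a tree factor (the full set of descendants of some node), a forest factor (a nonempty union of tree factors rooted at siblings), or a context factor (a tree factor minus a forest factor whose roots are strict descendants of the tree factor's root), an X-factor is a factor contained in X, and an X-factor is maximal if no other X-factor strictly contains it. -/

import Mathlib

/-- A hypergraph on vertex type `V`: a set of nonempty hyperedges. -/
structure HGraph (V : Type*) where
  E : Set (Set V)
  edge_nonempty : ∀ e ∈ E, e.Nonempty

/-- Two vertices are adjacent if they are distinct and share a hyperedge. -/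
def HGraph.adj {V : Type*} (H : HGraph V) (u v : V) : Prop :=
  u ≠ v ∧ ∃ e ∈ H.E, u ∈ e ∧ v ∈ e

/-- A rooted forest on `V`, given by parent pointers, with no infinite ancestor chains. -/
structure RootedForest (V : Type*) where
  parent : V → Option V
  wf : WellFounded fun a b => parent b = some a

/-- `F.anc a b` : `a` is an ancestor of `b` (every vertex is an ancestor of itself). -/
def RootedForest.anc {V : Type*} (F : RootedForest V) (a b : V) : Prop :=
  Relation.ReflTransGen (fun x y => F.parent x = some y) b a

/-- The set of descendants of `x` (including `x` itself). -/
def RootedForest.desc {V : Type*} (F : RootedForest V) (x : V) : Set V :=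
  {v | F.anc x v}

/-- `F` is an elimination forest of `H`: any two adjacent vertices are in
ancestor–descendant relation. -/
def IsEliminationForest {V : Type*} (H : HGraph V) (F : RootedForest V) : Prop :=
  ∀ u v, H.adj u v → F.anc u v ∨ F.anc v u

/-- `F` is reduced: every non-leaf vertex `u` is adjacent in `H` to the subtree
rooted at each of its children. -/
def IsReducedForest {V : Type*} (H : HGraph V) (F : RootedForest V) : Prop :=
  ∀ u v, F.parent v = some u → ∃ w ∈ F.desc v, H.adj u w

/-- The subhypergraph of `H` induced by `S` is connected. -/
def HConnectedOn {V : Type*} (H : HGraph V) (S : Set V) : Prop :=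
  ∀ a ∈ S, ∀ b ∈ S,
    Relation.ReflTransGen (fun x y => x ∈ S ∧ y ∈ S ∧ H.adj x y) a b

/-- A set of nodes all having the same parent (or all being roots). -/
def RootedForest.siblings {V : Type*} (F : RootedForest V) (R : Set V) : Prop :=
  ∀ r ∈ R, ∀ r' ∈ R, F.parent r = F.parent r'

/-- A tree factor: the full set of descendants of some node. -/
def IsTreeFactor {V : Type*} (F : RootedForest V) (S : Set V) : Prop :=
  ∃ x, S = F.desc x

/-- A forest factor: a nonempty union of tree factors whose roots are siblings. -/
def IsForestFactor {V : Type*} (F : RootedForest V) (S : Set V) : Prop :=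
  ∃ R : Set V, R.Nonempty ∧ F.siblings R ∧ S = ⋃ r ∈ R, F.desc r

/-- A context factor: a tree factor minus a forest factor whose roots are strict
descendants of the tree factor's root; a tree factor is not a context factor. -/
def IsContextFactor {V : Type*} (F : RootedForest V) (S : Set V) : Prop :=
  (∃ x, ∃ R : Set V, R.Nonempty ∧ F.siblings R ∧
    (∀ r ∈ R, F.anc x r ∧ r ≠ x) ∧ S = F.desc x \ ⋃ r ∈ R, F.desc r) ∧
  ¬ IsTreeFactor F S

/-- A factor is a tree factor, a forest factor, or a context factor. -/
def IsFactor {V : Type*} (F : RootedForest V) (S : Set V) : Prop :=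
  IsTreeFactor F S ∨ IsForestFactor F S ∨ IsContextFactor F S

/-- A maximal `X`-factor: a factor contained in `X` not strictly contained in any
other factor contained in `X`. -/
def IsMaxXFactor {V : Type*} (F : RootedForest V) (X S : Set V) : Prop :=
  IsFactor F S ∧ S ⊆ X ∧ ∀ S', IsFactor F S' → S' ⊆ X → S ⊆ S' → S' = S

/-!
Every factor has one of two shapes: a union of sibling subtrees, or a subtree minus a union of
sibling subtrees strictly below its root (possibly none). Comparing roots case by case shows that
the union of two overlapping factors again has one of these shapes. So two overlapping maximal
`X`-factors both equal their union, while every `v ∈ X` lies in the `X`-factor `{v}` and hence, by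
finiteness, in a maximal one.
-/

namespace RootedForest

variable {V : Type*} (F : RootedForest V)

lemma anc_refl (a : V) : F.anc a a := Relation.ReflTransGen.refl

lemma anc_trans {a b c : V} (hab : F.anc a b) (hbc : F.anc b c) : F.anc a c :=
  hbc.trans hab

lemma anc_of_parent_eq {p c : V} (h : F.parent c = some p) : F.anc p c :=
  Relation.ReflTransGen.single h

lemma parent_ne_self (a : V) : F.parent a ≠ some a :=
  F.wf.irrefl.irrefl a

lemma anc_antisymm {a b : V} (hab : F.anc a b) (hba : F.anc b a) : a = b := by
  by_contra hne
  have hba' := (Relation.reflTransGen_iff_eq_or_transGen.mp hab).resolve_left hne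
  have hab' := (Relation.reflTransGen_iff_eq_or_transGen.mp hba).resolve_left (Ne.symm hne)
  exact F.wf.transGen.irrefl.irrefl b (Relation.transGen_swap.mpr (hba'.trans hab'))

lemma anc_total_of_anc {a b v : V} (hav : F.anc a v) (hbv : F.anc b v) :
    F.anc a b ∨ F.anc b a := by
  induction v using F.wf.induction with
  | _ v ih =>
    rcases hav.cases_head with rfl | ⟨p, hp, hap⟩
    · exact Or.inr hbv
    rcases hbv.cases_head with rfl | ⟨p', hp', hbp'⟩
    · exact Or.inl (F.anc_trans hap (F.anc_of_parent_eq hp))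
    obtain rfl : p = p' := Option.some.inj (hp.symm.trans hp')
    exact ih p hp hap hbp'

lemma exists_parent_of_anc {a b : V} (h : F.anc a b) (hne : a ≠ b) :
    ∃ p, F.parent b = some p ∧ F.anc a p := by
  rcases h.cases_head with rfl | ⟨p, hp, hap⟩
  · exact absurd rfl hne
  · exact ⟨p, hp, hap⟩

lemma exists_child_of_anc {a b : V} (h : F.anc a b) (hne : a ≠ b) :
    ∃ c, F.parent c = some a ∧ F.anc c b := by
  rcases h.cases_tail with rfl | ⟨c, hcb, hc⟩
  · exact absurd rfl hne
  · exact ⟨c, hc, hcb⟩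

lemma anc_ne_of_parent_eq {x p c : V} (hc : F.parent c = some p) (hxp : F.anc x p) :
    F.anc x c ∧ c ≠ x := by
  refine ⟨F.anc_trans hxp (F.anc_of_parent_eq hc), ?_⟩
  rintro rfl
  obtain rfl := F.anc_antisymm hxp (F.anc_of_parent_eq hc)
  exact F.parent_ne_self c hc

lemma eq_of_parent_eq_of_anc {r s : V} (hp : F.parent r = F.parent s) (h : F.anc r s) :
    r = s := by
  by_contra hne
  obtain ⟨p, hsp, hrp⟩ := F.exists_parent_of_anc h hne
  exact (F.anc_ne_of_parent_eq (hp.trans hsp) hrp).2 rfl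

lemma siblings_mono {A B : Set V} (hAB : A ⊆ B) (hB : F.siblings B) : F.siblings A :=
  fun a ha a' ha' => hB a (hAB ha) a' (hAB ha')

lemma anc_ne_of_siblings {R : Set V} (hR : F.siblings R) {x r s : V} (hr : r ∈ R) (hs : s ∈ R)
    (hxr : F.anc x r) (hne : x ≠ r) : F.anc x s ∧ s ≠ x := by
  obtain ⟨p, hrp, hxp⟩ := F.exists_parent_of_anc hxr hne
  exact F.anc_ne_of_parent_eq ((hR s hs r hr).trans hrp) hxp

def subforest (R : Set V) : Set V := ⋃ r ∈ R, F.desc r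

lemma mem_subforest {R : Set V} {v : V} : v ∈ F.subforest R ↔ ∃ r ∈ R, F.anc r v := by
  simp only [subforest, Set.mem_iUnion, exists_prop]
  rfl

lemma desc_subset_subforest {R : Set V} {r : V} (hr : r ∈ R) : F.desc r ⊆ F.subforest R :=
  Set.subset_biUnion_of_mem (u := F.desc) hr

lemma desc_subset_desc {a b : V} (h : F.anc a b) : F.desc b ⊆ F.desc a :=
  fun _ hv => F.anc_trans h hv

lemma mem_subforest_of_anc {R : Set V} {a b : V} (hab : F.anc a b) (ha : a ∈ F.subforest R) :
    b ∈ F.subforest R := by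
  obtain ⟨r, hr, hra⟩ := F.mem_subforest.mp ha
  exact F.mem_subforest.mpr ⟨r, hr, F.anc_trans hra hab⟩

lemma subforest_subset_desc {R : Set V} (hR : F.siblings R) {x r : V} (hr : r ∈ R)
    (hxr : F.anc x r) (hne : x ≠ r) : F.subforest R ⊆ F.desc x := by
  intro w hw
  obtain ⟨s, hs, hsw⟩ := F.mem_subforest.mp hw
  exact F.anc_trans (F.anc_ne_of_siblings hR hr hs hxr hne).1 hsw

lemma anc_ne_of_mem_subforest {Q : Set V} {x w : V} (hQx : ∀ q ∈ Q, F.anc x q ∧ q ≠ x)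
    (hw : w ∈ F.subforest Q) : F.anc x w ∧ w ≠ x := by
  obtain ⟨q, hq, hqw⟩ := F.mem_subforest.mp hw
  refine ⟨F.anc_trans (hQx q hq).1 hqw, ?_⟩
  rintro rfl
  exact (hQx q hq).2 (F.anc_antisymm hqw (hQx q hq).1)

lemma subforest_inter_eq {A B : Set V} (hBA : ∀ b ∈ B, ∀ a ∈ A, F.anc b a → b = a) :
    F.subforest A ∩ F.subforest B = F.subforest (B ∩ F.subforest A) := by
  ext w
  simp only [Set.mem_inter_iff, mem_subforest]
  constructor
  · rintro ⟨⟨a, ha, haw⟩, ⟨b, hb, hbw⟩⟩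
    rcases F.anc_total_of_anc haw hbw with hab | hba
    · exact ⟨b, ⟨hb, a, ha, hab⟩, hbw⟩
    · obtain rfl := hBA b hb a ha hba
      exact ⟨b, ⟨hb, b, ha, F.anc_refl b⟩, hbw⟩
  · rintro ⟨b, ⟨hb, a, ha, hab⟩, hbw⟩
    exact ⟨⟨a, ha, F.anc_trans hab hbw⟩, ⟨b, hb, hbw⟩⟩

lemma subforest_diff_eq {A B : Set V} (hAB : ∀ a ∈ A, ∀ b ∈ B, F.anc a b → a = b) :
    F.subforest A \ F.subforest B = F.subforest (A \ F.subforest B) := by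
  ext w
  simp only [Set.mem_sdiff, mem_subforest, not_exists, not_and]
  constructor
  · rintro ⟨⟨a, ha, haw⟩, hwB⟩
    exact ⟨a, ⟨ha, fun b hb hba => hwB b hb (F.anc_trans hba haw)⟩, haw⟩
  · rintro ⟨a, ⟨ha, haB⟩, haw⟩
    refine ⟨⟨a, ha, haw⟩, fun b hb hbw => ?_⟩
    rcases F.anc_total_of_anc haw hbw with hab | hba
    · obtain rfl := hAB a ha b hb hab
      exact haB a hb (F.anc_refl a)
    · exact haB b hb hba

lemma siblings_forall_anc_eq_or {A B : Set V} (hA : F.siblings A) (hB : F.siblings B) :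
    (∀ a ∈ A, ∀ b ∈ B, F.anc a b → a = b) ∨ (∀ b ∈ B, ∀ a ∈ A, F.anc b a → b = a) := by
  by_contra! ⟨⟨a, ha, b, hb, hab, hne⟩, ⟨b', hb', a', ha', hba', hne'⟩⟩
  have hab' := F.anc_ne_of_siblings hB hb hb' hab hne
  obtain rfl : a = a' := F.eq_of_parent_eq_of_anc (hA a ha a' ha') (F.anc_trans hab'.1 hba')
  exact hab'.2 (F.anc_antisymm hba' hab'.1)

lemma isFactor_subforest {R : Set V} (hRne : R.Nonempty) (hR : F.siblings R) :
    IsFactor F (F.subforest R) :=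
  Or.inr (Or.inl ⟨R, hRne, hR, rfl⟩)

lemma isFactor_desc_diff_subforest {x : V} {Q : Set V} (hQ : F.siblings Q)
    (hQx : ∀ q ∈ Q, F.anc x q ∧ q ≠ x) : IsFactor F (F.desc x \ F.subforest Q) := by
  rcases Q.eq_empty_or_nonempty with rfl | hQne
  · simp only [subforest, Set.mem_empty_iff_false, Set.iUnion_of_empty, Set.iUnion_empty,
      Set.sdiff_empty]
    exact Or.inl ⟨x, rfl⟩
  · by_cases ht : IsTreeFactor F (F.desc x \ F.subforest Q)
    · exact Or.inl ht
    · exact Or.inr (Or.inr ⟨⟨x, Q, hQne, hQ, hQx, rfl⟩, ht⟩)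

lemma _root_.IsFactor.eq_subforest_or_eq_desc_diff {F : RootedForest V} {S : Set V}
    (h : IsFactor F S) :
    (∃ R, R.Nonempty ∧ F.siblings R ∧ S = F.subforest R) ∨
      ∃ x Q, F.siblings Q ∧ (∀ q ∈ Q, F.anc x q ∧ q ≠ x) ∧ S = F.desc x \ F.subforest Q := by
  rcases h with ⟨x, rfl⟩ | ⟨R, hRne, hR, rfl⟩ | ⟨⟨x, Q, -, hQ, hQx, rfl⟩, -⟩
  · refine Or.inl ⟨{x}, Set.singleton_nonempty x, ?_, by simp [subforest]⟩
    rintro r rfl r' rfl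
    rfl
  · exact Or.inl ⟨R, hRne, hR, rfl⟩
  · exact Or.inr ⟨x, Q, hQ, hQx, rfl⟩

lemma isFactor_subforest_union_subforest {R₁ R₂ : Set V} (hR₁ne : R₁.Nonempty)
    (hR₁ : F.siblings R₁) (hR₂ne : R₂.Nonempty) (hR₂ : F.siblings R₂)
    (hmeet : (F.subforest R₁ ∩ F.subforest R₂).Nonempty) :
    IsFactor F (F.subforest R₁ ∪ F.subforest R₂) := by
  obtain ⟨v, hv₁, hv₂⟩ := hmeet
  obtain ⟨r₁, hr₁, hr₁v⟩ := F.mem_subforest.mp hv₁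
  obtain ⟨r₂, hr₂, hr₂v⟩ := F.mem_subforest.mp hv₂
  wlog h₁₂ : F.anc r₁ r₂ generalizing R₁ R₂ r₁ r₂
  · rw [Set.union_comm]
    exact this hR₂ne hR₂ hR₁ne hR₁ hv₂ hv₁ r₂ hr₂ hr₂v r₁ hr₁ hr₁v
      ((F.anc_total_of_anc hr₁v hr₂v).resolve_left h₁₂)
  by_cases hne : r₁ = r₂
  · subst hne
    have hpar : ∀ t ∈ R₁ ∪ R₂, F.parent t = F.parent r₁ := by
      rintro t (ht | ht)
      exacts [hR₁ t ht r₁ hr₁, hR₂ t ht r₁ hr₂]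
    have hR : F.siblings (R₁ ∪ R₂) := fun s hs s' hs' => (hpar s hs).trans (hpar s' hs').symm
    rw [subforest, subforest, ← Set.biUnion_union]
    exact F.isFactor_subforest (hR₁ne.mono Set.subset_union_left) hR
  · have hsub : F.subforest R₂ ⊆ F.subforest R₁ :=
      (F.subforest_subset_desc hR₂ hr₂ h₁₂ hne).trans (F.desc_subset_subforest hr₁)
    rw [Set.union_eq_self_of_subset_right hsub]
    exact F.isFactor_subforest hR₁ne hR₁

lemma isFactor_subforest_union_desc_diff {R Q : Set V} {x : V} (hRne : R.Nonempty)
    (hR : F.siblings R) (hQ : F.siblings Q) (hQx : ∀ q ∈ Q, F.anc x q ∧ q ≠ x)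
    (hmeet : (F.subforest R ∩ (F.desc x \ F.subforest Q)).Nonempty) :
    IsFactor F (F.subforest R ∪ (F.desc x \ F.subforest Q)) := by
  obtain ⟨v, hvR, hvx, hvQ⟩ := hmeet
  obtain ⟨r, hr, hrv⟩ := F.mem_subforest.mp hvR
  by_cases hrx : F.anc r x
  · have hsub : F.desc x \ F.subforest Q ⊆ F.subforest R :=
      Set.sdiff_subset.trans ((F.desc_subset_desc hrx).trans (F.desc_subset_subforest hr))
    rw [Set.union_eq_self_of_subset_right hsub]
    exact F.isFactor_subforest hRne hR
  have hxr : F.anc x r := (F.anc_total_of_anc hvx hrv).resolve_right hrx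
  have hRx : F.subforest R ⊆ F.desc x :=
    F.subforest_subset_desc hR hr hxr (by rintro rfl; exact hrx (F.anc_refl x))
  have hQR : ∀ q ∈ Q, ∀ s ∈ R, F.anc q s → q = s := by
    by_contra! ⟨q, hq, s, hs, hqs, hne⟩
    exact hvQ (F.desc_subset_subforest hq (F.subforest_subset_desc hR hs hqs hne hvR))
  have hid : F.subforest R ∪ (F.desc x \ F.subforest Q) =
      F.desc x \ F.subforest (Q \ F.subforest R) := by
    rw [← F.subforest_diff_eq hQR, Set.sdiff_sdiff_right, Set.inter_eq_right.mpr hRx,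
      Set.union_comm]
  rw [hid]
  exact F.isFactor_desc_diff_subforest (F.siblings_mono Set.sdiff_subset hQ)
    fun q hq => hQx q hq.1

lemma isFactor_desc_diff_union_desc_diff {x₁ x₂ : V} {Q₁ Q₂ : Set V} (hQ₁ : F.siblings Q₁)
    (hQ₂ : F.siblings Q₂) (hQ₁x : ∀ q ∈ Q₁, F.anc x₁ q ∧ q ≠ x₁) (hx : F.anc x₁ x₂)
    (hmeet : ((F.desc x₁ \ F.subforest Q₁) ∩ (F.desc x₂ \ F.subforest Q₂)).Nonempty) :
    IsFactor F ((F.desc x₁ \ F.subforest Q₁) ∪ (F.desc x₂ \ F.subforest Q₂)) := by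
  obtain ⟨v, ⟨-, hvQ₁⟩, ⟨hvx₂, hvQ₂⟩⟩ := hmeet
  have hx₂Q₁ : x₂ ∉ F.subforest Q₁ := fun h => hvQ₁ (F.mem_subforest_of_anc hvx₂ h)
  by_cases hbelow : ∃ q ∈ Q₁, F.anc x₂ q
  · obtain ⟨q, hq, hx₂q⟩ := hbelow
    have hQ₁x₂ : F.subforest Q₁ ⊆ F.desc x₂ := F.subforest_subset_desc hQ₁ hq hx₂q
      (by rintro rfl; exact hx₂Q₁ (F.desc_subset_subforest hq (F.anc_refl x₂)))
    have hid : (F.desc x₁ \ F.subforest Q₁) ∪ (F.desc x₂ \ F.subforest Q₂) =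
        F.desc x₁ \ (F.subforest Q₁ ∩ F.subforest Q₂) := by
      ext w
      have : w ∈ F.desc x₂ → w ∈ F.desc x₁ := fun h => F.desc_subset_desc hx h
      have := @hQ₁x₂ w
      simp only [Set.mem_union, Set.mem_sdiff, Set.mem_inter_iff]
      tauto
    rw [hid]
    rcases F.siblings_forall_anc_eq_or hQ₁ hQ₂ with h | h
    · rw [Set.inter_comm, F.subforest_inter_eq h]
      exact F.isFactor_desc_diff_subforest (F.siblings_mono Set.inter_subset_left hQ₁)
        fun q hq => hQ₁x q hq.1
    · rw [F.subforest_inter_eq h]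
      exact F.isFactor_desc_diff_subforest (F.siblings_mono Set.inter_subset_left hQ₂)
        fun q hq => F.anc_ne_of_mem_subforest hQ₁x hq.2
  · have hsub : F.desc x₂ \ F.subforest Q₂ ⊆ F.desc x₁ \ F.subforest Q₁ := by
      rintro w ⟨hw, -⟩
      refine ⟨F.desc_subset_desc hx hw, fun hwQ => ?_⟩
      obtain ⟨q, hq, hqw⟩ := F.mem_subforest.mp hwQ
      rcases F.anc_total_of_anc hqw hw with hqx | hxq
      · exact hx₂Q₁ (F.mem_subforest.mpr ⟨q, hq, hqx⟩)
      · exact hbelow ⟨q, hq, hxq⟩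
    rw [Set.union_eq_self_of_subset_right hsub]
    exact F.isFactor_desc_diff_subforest hQ₁ hQ₁x

lemma isFactor_union {S₁ S₂ : Set V} (h₁ : IsFactor F S₁) (h₂ : IsFactor F S₂)
    (hmeet : (S₁ ∩ S₂).Nonempty) : IsFactor F (S₁ ∪ S₂) := by
  rcases h₁.eq_subforest_or_eq_desc_diff with ⟨R₁, hR₁ne, hR₁, rfl⟩ | ⟨x₁, Q₁, hQ₁, hQ₁x, rfl⟩ <;>
    rcases h₂.eq_subforest_or_eq_desc_diff with ⟨R₂, hR₂ne, hR₂, rfl⟩ | ⟨x₂, Q₂, hQ₂, hQ₂x, rfl⟩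
  · exact F.isFactor_subforest_union_subforest hR₁ne hR₁ hR₂ne hR₂ hmeet
  · exact F.isFactor_subforest_union_desc_diff hR₁ne hR₁ hQ₂ hQ₂x hmeet
  · rw [Set.union_comm]
    exact F.isFactor_subforest_union_desc_diff hR₂ne hR₂ hQ₁ hQ₁x (Set.inter_comm .. ▸ hmeet)
  · obtain ⟨v, ⟨hvx₁, -⟩, ⟨hvx₂, -⟩⟩ := id hmeet
    rcases F.anc_total_of_anc hvx₁ hvx₂ with hx | hx
    · exact F.isFactor_desc_diff_union_desc_diff hQ₁ hQ₂ hQ₁x hx hmeet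
    · rw [Set.union_comm]
      exact F.isFactor_desc_diff_union_desc_diff hQ₂ hQ₁ hQ₂x hx (Set.inter_comm .. ▸ hmeet)

lemma isFactor_singleton (v : V) : IsFactor F {v} := by
  have hv : ({v} : Set V) = F.desc v \ F.subforest {c | F.parent c = some v} := by
    ext w
    simp only [Set.mem_singleton_iff, Set.mem_sdiff, mem_subforest, Set.mem_ofPred_eq]
    constructor
    · rintro rfl
      exact ⟨F.anc_refl w, fun ⟨c, hc, hcw⟩ => (F.anc_ne_of_parent_eq hc (F.anc_refl w)).2
        (F.anc_antisymm hcw (F.anc_of_parent_eq hc))⟩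
    · rintro ⟨hvw, hchild⟩
      by_contra hne
      exact hchild (F.exists_child_of_anc hvw (Ne.symm hne))
  rw [hv]
  exact F.isFactor_desc_diff_subforest (fun c hc c' hc' => hc.trans hc'.symm)
    fun c hc => F.anc_ne_of_parent_eq hc (F.anc_refl v)

lemma isMaxXFactor_iff_maximal {X S : Set V} :
    IsMaxXFactor F X S ↔ Maximal (fun T => IsFactor F T ∧ T ⊆ X) S := by
  refine ⟨fun ⟨hS, hSX, hmax⟩ => ⟨⟨hS, hSX⟩, fun T ⟨hT, hTX⟩ hST => (hmax T hT hTX hST).le⟩,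
    fun ⟨⟨hS, hSX⟩, hmax⟩ => ⟨hS, hSX, fun T hT hTX hST => (hmax ⟨hT, hTX⟩ hST).antisymm hST⟩⟩

lemma exists_isMaxXFactor_mem [Finite V] {X : Set V} {v : V} (hv : v ∈ X) :
    ∃ S, IsMaxXFactor F X S ∧ v ∈ S := by
  obtain ⟨S, hvS, hS⟩ := Finite.exists_le_maximal (p := fun T => IsFactor F T ∧ T ⊆ X)
    ⟨F.isFactor_singleton v, Set.singleton_subset_iff.mpr hv⟩
  exact ⟨S, F.isMaxXFactor_iff_maximal.mpr hS, hvS rfl⟩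

lemma _root_.IsMaxXFactor.disjoint_of_ne {F : RootedForest V} {X S T : Set V}
    (hS : IsMaxXFactor F X S) (hT : IsMaxXFactor F X T) (hne : S ≠ T) : Disjoint S T := by
  rw [Set.disjoint_iff_inter_eq_empty, ← Set.not_nonempty_iff_eq_empty]
  intro hmeet
  have hST := F.isFactor_union hS.1 hT.1 hmeet
  have hSTX := Set.union_subset hS.2.1 hT.2.1
  exact hne ((hS.2.2 _ hST hSTX Set.subset_union_left).symm.trans
    (hT.2.2 _ hST hSTX Set.subset_union_right))

end RootedForest

/-- The maximal `X`-factors form a partition of `X`: they cover `X` and are pairwise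
disjoint. -/
theorem stmt_18 {V : Type*} [Fintype V] (F : RootedForest V) (X : Set V) :
    ⋃₀ {S | IsMaxXFactor F X S} = X ∧
    ∀ S S', IsMaxXFactor F X S → IsMaxXFactor F X S' → S ≠ S' → Disjoint S S' := by
  refine ⟨Set.Subset.antisymm (Set.sUnion_subset fun S hS => hS.2.1) fun v hv => ?_,
    fun S S' hS hS' => hS.disjoint_of_ne hS'⟩
  exact F.exists_isMaxXFactor_mem hv
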